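/- arXiv:quant-ph/0404097 — 3 statements merged into one kernel-verified Lean document; each statement's English description precedes it below -/
import Mathlib

section
/- The dimension of the bipartite no-signalling polytope with two inputs per party, where Alice's input X has d^A_X outputs and Bob's input Y has d^B_Y outputs, equals Σ_{X,Y∈{0,1}} d^A_X d^B_Y − Σ_X d^A_X − Σ_Y d^B_Y. In particular, for two binary inputs and two binary outputs it equals 8. -/
open Finset

/-- The set of non-signalling boxes with two inputs per party, where Alice's
input `X` has `dA X` outputs and Bob's input `Y` has `dB Y` outputs. -/
def NSPolytope (dA dB : Fin 2 → ℕ) :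
    Set (∀ X Y : Fin 2, Fin (dA X) → Fin (dB Y) → ℝ) :=
  {p | (∀ X Y a b, 0 ≤ p X Y a b) ∧
       (∀ X Y, ∑ a, ∑ b, p X Y a b = 1) ∧
       (∀ X a, ∀ Y Y' : Fin 2, ∑ b, p X Y a b = ∑ b, p X Y' a b) ∧
       (∀ Y b, ∀ X X' : Fin 2, ∑ a, p X Y a b = ∑ a, p X' Y a b)}

abbrev NSV (dA dB : Fin 2 → ℕ) := ∀ X Y : Fin 2, Fin (dA X) → Fin (dB Y) → ℝ

abbrev NSW (dA dB : Fin 2 → ℕ) :=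
  (Fin 2 → Fin 2 → ℝ) × (∀ X : Fin 2, Fin (dA X - 1) → ℝ) × (∀ Y : Fin 2, Fin (dB Y - 1) → ℝ)

def Lmap (dA dB : Fin 2 → ℕ) : NSV dA dB →ₗ[ℝ] NSW dA dB where
  toFun q := (fun X Y => ∑ a, ∑ b, q X Y a b,
    fun X a => (∑ b, q X 0 (Fin.castLE (Nat.sub_le _ _) a) b)
             - ∑ b, q X 1 (Fin.castLE (Nat.sub_le _ _) a) b,
    fun Y b => (∑ a, q 0 Y a (Fin.castLE (Nat.sub_le _ _) b))
             - ∑ a, q 1 Y a (Fin.castLE (Nat.sub_le _ _) b))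
  map_add' p q := by
    refine Prod.ext ?_ (Prod.ext ?_ ?_) <;> funext <;>
      simp [Finset.sum_add_distrib] <;> ring
  map_smul' c q := by
    refine Prod.ext ?_ (Prod.ext ?_ ?_) <;> funext <;>
      simp [Finset.mul_sum, mul_sub]

def Rbox (dA dB : Fin 2 → ℕ) (w : NSW dA dB) : NSV dA dB := fun X Y a b =>
  if ha : (a : ℕ) < dA X - 1 then
    if (b : ℕ) < dB Y - 1 then 0
    else if Y = 0 then w.2.1 X ⟨a, ha⟩ else 0
  else
    if hb : (b : ℕ) < dB Y - 1 then (if X = 0 then w.2.2 Y ⟨b, hb⟩ else 0)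
    else w.1 X Y - (if Y = 0 then ∑ a', w.2.1 X a' else 0)
               - (if X = 0 then ∑ b', w.2.2 Y b' else 0)

lemma sum_split {n : ℕ} (hn : 1 ≤ n) (g : Fin n → ℝ) :
    ∑ i, g i = (∑ i : Fin (n-1), g (Fin.castLE (Nat.sub_le n 1) i)) + g ⟨n-1, by omega⟩ := by
  obtain ⟨m, rfl⟩ : ∃ m, n = m + 1 := ⟨n-1, by omega⟩
  rw [Fin.sum_univ_castSucc]; rfl

variable {dA dB : Fin 2 → ℕ}

lemma Rbox_rowA (hB : ∀ Y, 1 ≤ dB Y) (w : NSW dA dB) (X Y : Fin 2) (a' : Fin (dA X - 1)) :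
    ∑ b, Rbox dA dB w X Y (Fin.castLE (Nat.sub_le _ _) a') b
      = if Y = 0 then w.2.1 X a' else 0 := by
  rw [sum_split (hB Y)]
  have h1 : ∀ b' : Fin (dB Y - 1),
      Rbox dA dB w X Y (Fin.castLE (Nat.sub_le _ _) a') (Fin.castLE (Nat.sub_le _ _) b') = 0 := by
    intro b'; simp [Rbox, a'.isLt, b'.isLt]
  simp [h1, Rbox, a'.isLt]

lemma Rbox_colB (hA : ∀ X, 1 ≤ dA X) (w : NSW dA dB) (X Y : Fin 2) (b' : Fin (dB Y - 1)) :
    ∑ a, Rbox dA dB w X Y a (Fin.castLE (Nat.sub_le _ _) b')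
      = if X = 0 then w.2.2 Y b' else 0 := by
  rw [sum_split (hA X)]
  have h1 : ∀ a' : Fin (dA X - 1),
      Rbox dA dB w X Y (Fin.castLE (Nat.sub_le _ _) a') (Fin.castLE (Nat.sub_le _ _) b') = 0 := by
    intro a'; simp [Rbox, a'.isLt, b'.isLt]
  simp [h1, Rbox, b'.isLt]

lemma Rbox_rowLast (hA : ∀ X, 1 ≤ dA X) (hB : ∀ Y, 1 ≤ dB Y) (w : NSW dA dB) (X Y : Fin 2) :
    ∑ b, Rbox dA dB w X Y ⟨dA X - 1, Nat.sub_lt (hA X) one_pos⟩ b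
      = w.1 X Y - (if Y = 0 then ∑ a', w.2.1 X a' else 0) := by
  rw [sum_split (hB Y)]
  have h1 : ∀ b' : Fin (dB Y - 1),
      Rbox dA dB w X Y ⟨dA X - 1, Nat.sub_lt (hA X) one_pos⟩ (Fin.castLE (Nat.sub_le _ _) b')
        = if X = 0 then w.2.2 Y b' else 0 := by
    intro b'; simp [Rbox, b'.isLt]
  have h2 : Rbox dA dB w X Y ⟨dA X - 1, Nat.sub_lt (hA X) one_pos⟩ ⟨dB Y - 1, Nat.sub_lt (hB Y) one_pos⟩
      = w.1 X Y - (if Y = 0 then ∑ a', w.2.1 X a' else 0)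
               - (if X = 0 then ∑ b', w.2.2 Y b' else 0) := by
    simp [Rbox]
  rw [Finset.sum_congr rfl (fun b' _ => h1 b'), h2]
  by_cases hX : X = 0 <;> simp [hX] <;> ring

lemma Lmap_Rbox (hA : ∀ X, 1 ≤ dA X) (hB : ∀ Y, 1 ≤ dB Y) (w : NSW dA dB) :
    Lmap dA dB (Rbox dA dB w) = w := by
  refine Prod.ext ?_ (Prod.ext ?_ ?_)
  · funext X Y
    show (∑ a, ∑ b, Rbox dA dB w X Y a b) = w.1 X Y
    rw [sum_split (hA X) (fun a => ∑ b, Rbox dA dB w X Y a b), Rbox_rowLast hA hB,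
      Finset.sum_congr rfl (fun a' _ => Rbox_rowA hB w X Y a')]
    by_cases hY : Y = 0 <;> simp [hY]
  · funext X a'
    show (∑ b, Rbox dA dB w X 0 (Fin.castLE _ a') b)
        - (∑ b, Rbox dA dB w X 1 (Fin.castLE _ a') b) = w.2.1 X a'
    rw [Rbox_rowA hB, Rbox_rowA hB]
    norm_num
  · funext Y b'
    show (∑ a, Rbox dA dB w 0 Y a (Fin.castLE _ b'))
        - (∑ a, Rbox dA dB w 1 Y a (Fin.castLE _ b')) = w.2.2 Y b'
    rw [Rbox_colB hA, Rbox_colB hA]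
    norm_num

lemma fin_cases_last {n : ℕ} (hn : 1 ≤ n) (a : Fin n) :
    (∃ a' : Fin (n-1), a = Fin.castLE (Nat.sub_le n 1) a') ∨ a = ⟨n-1, Nat.sub_lt hn one_pos⟩ := by
  rcases lt_or_ge (a : ℕ) (n-1) with h | h
  · exact Or.inl ⟨⟨a, h⟩, Fin.ext rfl⟩
  · refine Or.inr (Fin.ext ?_); simp only []; omega

lemma ker_margA (hA : ∀ X, 1 ≤ dA X) (q : NSV dA dB) (h : Lmap dA dB q = 0) :
    ∀ (X : Fin 2) a, ∀ Y Y' : Fin 2, ∑ b, q X Y a b = ∑ b, q X Y' a b := by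
  have hn : ∀ X Y, ∑ a, ∑ b, q X Y a b = 0 := by
    intro X Y; have := congrArg (fun w => w.1 X Y) h; simpa [Lmap] using this
  have hm : ∀ X (a' : Fin (dA X - 1)),
      (∑ b, q X 0 (Fin.castLE (Nat.sub_le _ _) a') b)
        - ∑ b, q X 1 (Fin.castLE (Nat.sub_le _ _) a') b = 0 := by
    intro X a'; have := congrArg (fun w => w.2.1 X a') h; simpa [Lmap] using this
  have hall : ∀ X (a : Fin (dA X)), (∑ b, q X 0 a b) - ∑ b, q X 1 a b = 0 := by
    intro X a
    set f : Fin (dA X) → ℝ := fun a => (∑ b, q X 0 a b) - ∑ b, q X 1 a b with hf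
    have hfs : ∑ a, f a = 0 := by
      rw [Finset.sum_sub_distrib, hn X 0, hn X 1]; ring
    have hsp := sum_split (hA X) f
    rw [Finset.sum_congr rfl (fun a' _ => hm X a')] at hsp
    have hflast : f ⟨dA X - 1, Nat.sub_lt (hA X) one_pos⟩ = 0 := by
      simpa [hfs] using hsp.symm
    rcases fin_cases_last (hA X) a with ⟨a', rfl⟩ | rfl
    · exact hm X a'
    · exact hflast
  intro X a Y Y'
  have h01 : ∑ b, q X 0 a b = ∑ b, q X 1 a b := sub_eq_zero.1 (hall X a)
  fin_cases Y <;> fin_cases Y' <;> simp [h01]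

lemma ker_margB (hB : ∀ Y, 1 ≤ dB Y) (q : NSV dA dB) (h : Lmap dA dB q = 0) :
    ∀ (Y : Fin 2) b, ∀ X X' : Fin 2, ∑ a, q X Y a b = ∑ a, q X' Y a b := by
  have hn : ∀ X Y, ∑ a, ∑ b, q X Y a b = 0 := by
    intro X Y; have := congrArg (fun w => w.1 X Y) h; simpa [Lmap] using this
  have hm : ∀ Y (b' : Fin (dB Y - 1)),
      (∑ a, q 0 Y a (Fin.castLE (Nat.sub_le _ _) b'))
        - ∑ a, q 1 Y a (Fin.castLE (Nat.sub_le _ _) b') = 0 := by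
    intro Y b'; have := congrArg (fun w => w.2.2 Y b') h; simpa [Lmap] using this
  have hall : ∀ Y (b : Fin (dB Y)), (∑ a, q 0 Y a b) - ∑ a, q 1 Y a b = 0 := by
    intro Y b
    set f : Fin (dB Y) → ℝ := fun b => (∑ a, q 0 Y a b) - ∑ a, q 1 Y a b with hf
    have hfs : ∑ b, f b = 0 := by
      rw [Finset.sum_sub_distrib]
      rw [← Finset.sum_comm (f := fun a b => q 0 Y a b),
          ← Finset.sum_comm (f := fun a b => q 1 Y a b), hn 0 Y, hn 1 Y]; ring
    have hsp := sum_split (hB Y) f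
    rw [Finset.sum_congr rfl (fun b' _ => hm Y b')] at hsp
    have hflast : f ⟨dB Y - 1, Nat.sub_lt (hB Y) one_pos⟩ = 0 := by
      simpa [hfs] using hsp.symm
    rcases fin_cases_last (hB Y) b with ⟨b', rfl⟩ | rfl
    · exact hm Y b'
    · exact hflast
  intro Y b X X'
  have h01 : ∑ a, q 0 Y a b = ∑ a, q 1 Y a b := sub_eq_zero.1 (hall Y b)
  fin_cases X <;> fin_cases X' <;> simp [h01]

lemma Lmap_mem (p : NSV dA dB) (hp : p ∈ NSPolytope dA dB) :
    Lmap dA dB p = ((fun _ _ => 1), 0, 0) := by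
  obtain ⟨-, h2, h3, h4⟩ := hp
  refine Prod.ext ?_ (Prod.ext ?_ ?_)
  · funext X Y; simpa [Lmap] using h2 X Y
  · funext X a'; simp [Lmap, h3 X _ 0 1]
  · funext Y b'; simp [Lmap, h4 Y _ 0 1]

noncomputable def uBox (dA dB : Fin 2 → ℕ) : NSV dA dB :=
  fun X Y _ _ => ((dA X : ℝ) * (dB Y : ℝ))⁻¹

lemma uBox_mem (hA : ∀ X, 1 ≤ dA X) (hB : ∀ Y, 1 ≤ dB Y) :
    uBox dA dB ∈ NSPolytope dA dB := by
  have hA0 : ∀ X, (0:ℝ) < (dA X : ℝ) := fun X => by exact_mod_cast hA X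
  have hB0 : ∀ Y, (0:ℝ) < (dB Y : ℝ) := fun Y => by exact_mod_cast hB Y
  have keyB : ∀ X Y : Fin 2, ∑ _b : Fin (dB Y), ((dA X : ℝ) * (dB Y : ℝ))⁻¹ = (dA X : ℝ)⁻¹ := by
    intro X Y
    simp only [Finset.sum_const, Finset.card_univ, Fintype.card_fin, nsmul_eq_mul]
    rw [mul_inv, ← mul_assoc, mul_comm ((dB Y : ℝ)) ((dA X:ℝ))⁻¹, mul_assoc,
      mul_inv_cancel₀ (hB0 Y).ne', mul_one]
  have keyA : ∀ X Y : Fin 2, ∑ _a : Fin (dA X), ((dA X : ℝ) * (dB Y : ℝ))⁻¹ = (dB Y : ℝ)⁻¹ := by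
    intro X Y
    simp only [Finset.sum_const, Finset.card_univ, Fintype.card_fin, nsmul_eq_mul]
    rw [mul_inv, ← mul_assoc, mul_inv_cancel₀ (hA0 X).ne', one_mul]
  refine ⟨fun X Y a b => ?_, ?_, ?_, ?_⟩
  · show (0:ℝ) ≤ ((dA X : ℝ) * (dB Y : ℝ))⁻¹
    positivity
  · intro X Y
    show ∑ _a : Fin (dA X), ∑ _b : Fin (dB Y), ((dA X : ℝ) * (dB Y : ℝ))⁻¹ = 1
    rw [Finset.sum_congr rfl (fun a _ => keyB X Y)]
    simp only [Finset.sum_const, Finset.card_univ, Fintype.card_fin, nsmul_eq_mul]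
    exact mul_inv_cancel₀ (hA0 X).ne'
  · intro X a Y Y'
    show ∑ _b : Fin (dB Y), ((dA X : ℝ) * (dB Y : ℝ))⁻¹
        = ∑ _b : Fin (dB Y'), ((dA X : ℝ) * (dB Y' : ℝ))⁻¹
    rw [keyB X Y, keyB X Y']
  · intro Y b X X'
    show ∑ _a : Fin (dA X), ((dA X : ℝ) * (dB Y : ℝ))⁻¹
        = ∑ _a : Fin (dA X'), ((dA X' : ℝ) * (dB Y : ℝ))⁻¹
    rw [keyA X Y, keyA X' Y]

set_option maxHeartbeats 1000000 in
theorem NSPolytope_dim' (dA dB : Fin 2 → ℕ)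
    (hA : ∀ X, 1 ≤ dA X) (hB : ∀ Y, 1 ≤ dB Y) :
    Module.finrank ℝ (affineSpan ℝ (NSPolytope dA dB)).direction =
      (∑ X : Fin 2, ∑ Y : Fin 2, dA X * dB Y)
        - (∑ X : Fin 2, dA X) - (∑ Y : Fin 2, dB Y) := by
  have hA0 : ∀ X, (0:ℝ) < (dA X : ℝ) := fun X => by exact_mod_cast hA X
  have hB0 : ∀ Y, (0:ℝ) < (dB Y : ℝ) := fun Y => by exact_mod_cast hB Y
  have hdir : (affineSpan ℝ (NSPolytope dA dB)).direction = LinearMap.ker (Lmap dA dB) := by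
    apply le_antisymm
    · rw [direction_affineSpan, vectorSpan_def]
      refine Submodule.span_le.2 ?_
      rintro v hv
      rw [Set.mem_vsub] at hv
      obtain ⟨p, hp, p', hp', rfl⟩ := hv
      have : Lmap dA dB (p -ᵥ p') = 0 := by
        rw [vsub_eq_sub, map_sub, Lmap_mem p hp, Lmap_mem p' hp', sub_self]
      exact this
    · intro q hq
      rw [LinearMap.mem_ker] at hq
      have hP : (0:ℝ) < ((dA 0 * dA 1 * dB 0 * dB 1 : ℕ) : ℝ) := by
        exact_mod_cast Nat.mul_pos (Nat.mul_pos (Nat.mul_pos (hA 0) (hA 1)) (hB 0)) (hB 1)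
      have hprod : ∀ X Y : Fin 2, ((dA X : ℝ) * (dB Y : ℝ)) ≤ ((dA 0 * dA 1 * dB 0 * dB 1 : ℕ) : ℝ) := by
        have hnat : ∀ X Y : Fin 2, dA X * dB Y ≤ dA 0 * dA 1 * dB 0 * dB 1 := by
          have ha : ∀ X : Fin 2, dA X ≤ dA 0 * dA 1 :=
            Fin.forall_fin_two.mpr ⟨Nat.le_mul_of_pos_right _ (hA 1), Nat.le_mul_of_pos_left _ (hA 0)⟩
          have hb : ∀ Y : Fin 2, dB Y ≤ dB 0 * dB 1 :=
            Fin.forall_fin_two.mpr ⟨Nat.le_mul_of_pos_right _ (hB 1), Nat.le_mul_of_pos_left _ (hB 0)⟩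
          intro X Y
          calc dA X * dB Y ≤ (dA 0 * dA 1) * (dB 0 * dB 1) := Nat.mul_le_mul (ha X) (hb Y)
            _ = dA 0 * dA 1 * dB 0 * dB 1 := by ring
        intro X Y
        have := hnat X Y
        push_cast
        exact_mod_cast Nat.cast_le.2 this
      obtain ⟨ε, hε, hbound⟩ : ∃ ε : ℝ, 0 < ε ∧ ∀ X Y (a : Fin (dA X)) (b : Fin (dB Y)),
          ε * |q X Y a b| ≤ ((dA X : ℝ) * (dB Y : ℝ))⁻¹ := by
        refine ⟨(((dA 0 * dA 1 * dB 0 * dB 1 : ℕ) : ℝ) * (‖q‖ + 1))⁻¹,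
          inv_pos.2 (mul_pos hP (by positivity)), ?_⟩
        intro X Y a b
        have h1 : |q X Y a b| ≤ ‖q‖ := by
          calc |q X Y a b| = ‖q X Y a b‖ := (Real.norm_eq_abs _).symm
            _ ≤ ‖q X Y a‖ := norm_le_pi_norm (q X Y a) b
            _ ≤ ‖q X Y‖ := norm_le_pi_norm (q X Y) a
            _ ≤ ‖q X‖ := norm_le_pi_norm (q X) Y
            _ ≤ ‖q‖ := norm_le_pi_norm q X
        have hq0 : (0:ℝ) ≤ ‖q‖ := norm_nonneg q
        calc (((dA 0 * dA 1 * dB 0 * dB 1 : ℕ) : ℝ) * (‖q‖ + 1))⁻¹ * |q X Y a b|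
            ≤ (((dA 0 * dA 1 * dB 0 * dB 1 : ℕ) : ℝ) * (‖q‖ + 1))⁻¹ * (‖q‖ + 1) := by
              refine mul_le_mul_of_nonneg_left (by linarith) ?_
              exact le_of_lt (inv_pos.2 (mul_pos hP (by positivity)))
          _ = ((dA 0 * dA 1 * dB 0 * dB 1 : ℕ) : ℝ)⁻¹ := by
              rw [mul_inv, mul_assoc, inv_mul_cancel₀ (by positivity), mul_one]
          _ ≤ ((dA X : ℝ) * (dB Y : ℝ))⁻¹ :=
              inv_anti₀ (mul_pos (hA0 X) (hB0 Y)) (hprod X Y)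
      have hn : ∀ X Y, ∑ a, ∑ b, q X Y a b = 0 := by
        intro X Y; have := congrArg (fun w => w.1 X Y) hq; simpa [Lmap] using this
      obtain ⟨hu1, hu2, hu3, hu4⟩ := uBox_mem hA hB
      have hmem : uBox dA dB + ε • q ∈ NSPolytope dA dB := by
        refine ⟨?_, ?_, ?_, ?_⟩
        · intro X Y a b
          have hb := hbound X Y a b
          have habs : -|q X Y a b| ≤ q X Y a b := neg_abs_le _
          have h0 : (0:ℝ) ≤ ((dA X : ℝ) * (dB Y : ℝ))⁻¹ + ε * q X Y a b := by nlinarith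
          simpa [uBox] using h0
        · intro X Y
          simp only [Pi.add_apply, Pi.smul_apply, smul_eq_mul, Finset.sum_add_distrib,
            ← Finset.mul_sum]
          rw [hu2 X Y, hn X Y]; ring
        · intro X a Y Y'
          simp only [Pi.add_apply, Pi.smul_apply, smul_eq_mul, Finset.sum_add_distrib,
            ← Finset.mul_sum]
          rw [hu3 X a Y Y', ker_margA hA q hq X a Y Y']
        · intro Y b X X'
          simp only [Pi.add_apply, Pi.smul_apply, smul_eq_mul, Finset.sum_add_distrib,
            ← Finset.mul_sum]
          rw [hu4 Y b X X', ker_margB hB q hq Y b X X']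
      have h1 := subset_affineSpan ℝ (NSPolytope dA dB) (uBox_mem hA hB)
      have h2 := subset_affineSpan ℝ (NSPolytope dA dB) hmem
      have h3 := AffineSubspace.vsub_mem_direction h2 h1
      have h4 : (uBox dA dB + ε • q) -ᵥ uBox dA dB = ε • q := by
        rw [vsub_eq_sub]; abel
      rw [h4] at h3
      have h5 := (affineSpan ℝ (NSPolytope dA dB)).direction.smul_mem ε⁻¹ h3
      rwa [smul_smul, inv_mul_cancel₀ hε.ne', one_smul] at h5
  have hsurj : LinearMap.range (Lmap dA dB) = ⊤ := by
    rw [LinearMap.range_eq_top]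
    intro w; exact ⟨Rbox dA dB w, Lmap_Rbox hA hB w⟩
  have hrn := LinearMap.finrank_range_add_finrank_ker (Lmap dA dB)
  rw [hsurj, finrank_top] at hrn
  have hV : Module.finrank ℝ (NSV dA dB) = ∑ X : Fin 2, ∑ Y : Fin 2, dA X * dB Y := by
    simp [Module.finrank_pi_fintype, Finset.sum_const, Finset.card_univ]
  have w1 : Module.finrank ℝ (Fin 2 → Fin 2 → ℝ) = 4 := by
    simp [Module.finrank_pi_fintype]
  have w2 : Module.finrank ℝ (∀ X : Fin 2, Fin (dA X - 1) → ℝ) = ∑ X : Fin 2, (dA X - 1) := by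
    simp [Module.finrank_pi_fintype]
  have w3 : Module.finrank ℝ (∀ Y : Fin 2, Fin (dB Y - 1) → ℝ) = ∑ Y : Fin 2, (dB Y - 1) := by
    simp [Module.finrank_pi_fintype]
  have hW : Module.finrank ℝ (NSW dA dB)
      = 4 + ((∑ X : Fin 2, (dA X - 1)) + ∑ Y : Fin 2, (dB Y - 1)) := by
    show Module.finrank ℝ ((Fin 2 → Fin 2 → ℝ) ×
      ((∀ X : Fin 2, Fin (dA X - 1) → ℝ) × (∀ Y : Fin 2, Fin (dB Y - 1) → ℝ))) = _
    rw [Module.finrank_prod, Module.finrank_prod, w1, w2, w3]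
  rw [hV, hW] at hrn
  have key : Module.finrank ℝ ↥(LinearMap.ker (Lmap dA dB)) =
      (∑ X : Fin 2, ∑ Y : Fin 2, dA X * dB Y)
        - (∑ X : Fin 2, dA X) - (∑ Y : Fin 2, dB Y) := by
    revert hrn
    generalize Module.finrank ℝ ↥(LinearMap.ker (Lmap dA dB)) = m
    intro hrn
    have e1 := hA 0; have e2 := hA 1; have e3 := hB 0; have e4 := hB 1
    simp only [Fin.sum_univ_two] at hrn ⊢
    obtain ⟨a0, ha0⟩ : ∃ m, dA 0 = m + 1 := ⟨dA 0 - 1, by omega⟩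
    obtain ⟨a1, ha1⟩ : ∃ m, dA 1 = m + 1 := ⟨dA 1 - 1, by omega⟩
    obtain ⟨b0, hb0⟩ : ∃ m, dB 0 = m + 1 := ⟨dB 0 - 1, by omega⟩
    obtain ⟨b1, hb1⟩ : ∃ m, dB 1 = m + 1 := ⟨dB 1 - 1, by omega⟩
    rw [ha0, ha1, hb0, hb1] at hrn ⊢
    rw [Nat.sub_sub]
    symm
    apply Nat.sub_eq_of_eq_add
    have expand : ∀ x y : ℕ, (x + 1) * (y + 1) = x * y + x + y + 1 := by intro x y; ring
    rw [expand, expand, expand, expand] at hrn ⊢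
    omega
  rw [hdir]
  exact key


/-- the dimension (of the affine hull) of the two-input
no-signalling polytope equals
`Σ_{X,Y} dA_X dB_Y − Σ_X dA_X − Σ_Y dB_Y`
(in particular `8` for two binary inputs and two binary outputs). -/
theorem NSPolytope_dim (dA dB : Fin 2 → ℕ)
    (hA : ∀ X, 1 ≤ dA X) (hB : ∀ Y, 1 ≤ dB Y) :
    Module.finrank ℝ (affineSpan ℝ (NSPolytope dA dB)).direction =
      (∑ X : Fin 2, ∑ Y : Fin 2, dA X * dB Y)
        - (∑ X : Fin 2, dA X) - (∑ Y : Fin 2, dB Y) :=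
  NSPolytope_dim' dA dB hA hB
end

section
/- The condition (b − a) mod dd' = X·Y, with a = α'd + α, b = β'd + β, α,β ∈ {0,…,d−1}, α',β' ∈ {0,…,d'−1}, and X·Y ∈ {0,1}, is equivalent to the conjunction: (β − α) mod d = X·Y, and (β' − α') mod d' = X·Y if α = d−1, while (β' − α') mod d' = 0 otherwise. -/
theorem emod_eq_iff_dvd' {n z c : ℤ} (h0 : 0 ≤ c) (h1 : c < n) :
    z % n = c ↔ n ∣ z - c := by
  constructor
  · intro h
    have h2 : Int.ModEq n z c := by
      unfold Int.ModEq; rw [h, Int.emod_eq_of_lt h0 h1]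
    exact (Int.ModEq.symm h2).dvd
  · intro h
    have h2 : Int.ModEq n c z := Int.modEq_iff_dvd.mpr h
    have h3 := h2.symm
    unfold Int.ModEq at h3
    rw [h3, Int.emod_eq_of_lt h0 h1]

theorem small_mul_cases {m d : ℤ} (hd : 0 < d) (h1 : -d ≤ m * d) (h2 : m * d ≤ d - 1) :
    m = 0 ∨ m = -1 := by
  rcases le_or_gt m (-2) with h | h
  · exfalso; nlinarith
  rcases le_or_gt 1 m with h' | h'
  · exfalso; nlinarith
  omega

/-- with `a = α'd + α`, `b = β'd + β`, `α,β ∈ {0,…,d−1}`,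
`α',β' ∈ {0,…,d'−1}` and `x·y ∈ {0,1}`, the condition
`(b − a) mod dd' = x·y` is equivalent to the conjunction
`(β − α) mod d = x·y` and (`(β' − α') mod d' = x·y` if `α = d−1`,
while `(β' − α') mod d' = 0` otherwise). -/
theorem protocol1_condition_equiv
    (d d' : ℤ) (hd : 2 ≤ d) (hd' : 2 ≤ d')
    (x y : ℤ) (hx : 0 ≤ x) (hx1 : x ≤ 1) (hy : 0 ≤ y) (hy1 : y ≤ 1)
    (α β α' β' : ℤ)
    (hα : 0 ≤ α) (hα' : α < d) (hβ : 0 ≤ β) (hβ' : β < d)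
    (hα'0 : 0 ≤ α') (hα'1 : α' < d') (hβ'0 : 0 ≤ β') (hβ'1 : β' < d') :
    ((β' * d + β) - (α' * d + α)) % (d * d') = x * y ↔
      ((β - α) % d = x * y ∧
        (if α = d - 1 then (β' - α') % d' = x * y else (β' - α') % d' = 0)) := by
  set p := x * y with hp_def
  have hp0 : 0 ≤ p := mul_nonneg hx hy
  have hp1 : p ≤ 1 := by nlinarith
  have hdpos : (0:ℤ) < d := by omega
  have hd'pos : (0:ℤ) < d' := by omega
  have hdd' : p < d * d' := by nlinarith
  have hpd : p < d := by omega
  have hpd' : p < d' := by omega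
  rw [emod_eq_iff_dvd' hp0 hdd', emod_eq_iff_dvd' hp0 hpd]
  have key : (β' * d + β) - (α' * d + α) - p = (β' - α') * d + ((β - α) - p) := by ring
  constructor
  · rintro ⟨k, hk⟩
    have hsd : β - α - p = (k * d' - (β' - α')) * d := by linear_combination hk
    have hm : k * d' - (β' - α') = 0 ∨ k * d' - (β' - α') = -1 :=
      small_mul_cases hdpos (by omega) (by omega)
    rcases hm with hm | hm
    · rw [hm] at hsd
      have hs : β - α = p := by omega
      have ht : β' - α' = k * d' := by omega
      have htz : β' - α' = 0 := by
        rcases small_mul_cases hd'pos (m := k) (d := d') (by omega) (by omega) with h0 | h0 <;>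
          rw [h0] at ht <;> omega
      refine ⟨⟨0, by omega⟩, ?_⟩
      split_ifs with hcase
      · have hpz : p = 0 := by omega
        rw [emod_eq_iff_dvd' hp0 hpd']
        exact ⟨0, by omega⟩
      · rw [emod_eq_iff_dvd' le_rfl hd'pos]
        exact ⟨0, by omega⟩
    · rw [hm] at hsd
      have hs : β - α - p = -d := by omega
      have hp1' : p = 1 := by omega
      have hcase : α = d - 1 := by omega
      have ht : β' - α' - 1 = k * d' := by omega
      refine ⟨⟨-1, by omega⟩, ?_⟩
      rw [if_pos hcase, emod_eq_iff_dvd' hp0 hpd', hp1']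
      exact ⟨k, by linear_combination ht⟩
  · rintro ⟨⟨m, hm1⟩, h2⟩
    have hmcases : m = 0 ∨ m = -1 := by
      have hcm : m * d = d * m := mul_comm m d
      exact small_mul_cases hdpos (by omega) (by omega)
    split_ifs at h2 with hcase
    · rw [emod_eq_iff_dvd' hp0 hpd'] at h2
      obtain ⟨j, hj⟩ := h2
      rcases hmcases with hm | hm
      · subst hm
        have hs : β - α = p := by omega
        have hpz : p = 0 := by omega
        exact ⟨j, by rw [key]; linear_combination d * hj + hs + d * hpz⟩
      · subst hm
        have hs : β - α - p = -d := by omega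
        have hpz : p = 1 := by omega
        exact ⟨j, by rw [key]; linear_combination d * hj + hs + d * hpz⟩
    · rw [emod_eq_iff_dvd' le_rfl hd'pos] at h2
      obtain ⟨j, hj⟩ := h2
      rcases hmcases with hm | hm
      · subst hm
        have hs : β - α = p := by omega
        exact ⟨j, by rw [key]; linear_combination d * hj + hs⟩
      · subst hm
        exfalso
        have hs : β - α - p = -d := by omega
        omega
end

section
/- Protocol 2 correctness: If (α, β) is distributed as a dd'-box given inputs (X,Y), then a = α mod d and b = β mod d are distributed as a d-box given (X,Y): p(ab|XY) = 1/d if (b − a) mod d = X·Y and 0 otherwise. -/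
/-!
The output `β` of a `dd'`-box is determined by `α`, namely `β ≡ α + XY (mod dd')`; since `d ∣ dd'`,
reducing mod `d` gives `b ≡ a + XY (mod d)`. As `α` is uniform on `[0, dd')` and every residue
class mod `d` has exactly `d'` elements there, each admissible pair `(a, b)` has probability
`d' / (dd') = 1 / d`.
-/

/-- The `d`-box: `p(αβ|XY) = 1/d` if `(β − α) mod d = X·Y`, else `0`. -/
noncomputable def dBox (d : ℕ) : Fin 2 → Fin 2 → Fin d → Fin d → ℝ :=
  fun X Y α β => if (β.val + (d - α.val)) % d = X.val * Y.val then 1 / d else 0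

/-- The output distribution of Protocol 2: sample `(α,β)` from a `dd'`-box
and output `a = α mod d`, `b = β mod d`. -/
noncomputable def protocol2 (d d' : ℕ) :
    Fin 2 → Fin 2 → Fin d → Fin d → ℝ :=
  fun X Y a b =>
    ∑ α : Fin (d * d'), ∑ β : Fin (d * d'),
      dBox (d * d') X Y α β *
      (if a.val = α.val % d ∧ b.val = β.val % d then 1 else 0)

open Finset

theorem Nat.add_sub_mod_eq_iff {n e a b : ℕ} (he : e < n) (ha : a < n) (hb : b < n) :
    (b + (n - a)) % n = e ↔ b = (a + e) % n := by
  constructor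
  · rintro rfl
    rw [Nat.add_mod_mod, show a + (b + (n - a)) = b + n by omega, Nat.add_mod_right,
      Nat.mod_eq_of_lt hb]
  · rintro rfl
    rw [Nat.mod_add_mod, show a + e + (n - a) = e + n by omega, Nat.add_mod_right,
      Nat.mod_eq_of_lt he]

theorem Fin.sum_ite_val_mod_eq {M : Type*} [AddCommMonoid M] {d : ℕ} (d' : ℕ) {a : ℕ}
    (ha : a < d) (c : M) :
    ∑ α : Fin (d * d'), (if α.val % d = a then c else 0) = d' • c := by
  have hd : 0 < d := by omega
  rw [Fin.sum_univ_eq_sum_range (fun i ↦ if i % d = a then c else 0), sum_ite, sum_const_zero,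
    add_zero, Finset.sum_const, ← Nat.count_eq_card_filter_range]
  have hcount := Nat.count_modEq_card (d * d') hd a
  simp only [Nat.ModEq, Nat.mod_eq_of_lt ha, Nat.mul_mod_right, Nat.not_lt_zero, if_false,
    add_zero, Nat.mul_div_cancel_left _ hd] at hcount
  rw [hcount]

section Box

variable {d d' : ℕ} {X Y : Fin 2}

theorem dBox_apply (hXY : X.val * Y.val < d) (α β : Fin d) :
    dBox d X Y α β = if β.val = (α.val + X.val * Y.val) % d then (1 / d : ℝ) else 0 := by
  simp only [dBox, Nat.add_sub_mod_eq_iff hXY α.isLt β.isLt]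

theorem protocol2_apply_eq_sum (hXY : X.val * Y.val < d * d') (a b : Fin d) :
    protocol2 d d' X Y a b = ∑ α : Fin (d * d'),
      if a.val = α.val % d ∧ b.val = (α.val + X.val * Y.val) % d
        then (1 / (d * d' : ℕ) : ℝ) else 0 := by
  refine sum_congr rfl fun α _ ↦ ?_
  have hn : 0 < d * d' := by omega
  rw [Fintype.sum_eq_single ⟨(α.val + X.val * Y.val) % (d * d'), Nat.mod_lt _ hn⟩
    fun β hβ ↦ by rw [dBox_apply hXY, if_neg (mt Fin.ext hβ), zero_mul]]
  simp only [dBox_apply hXY, if_pos, Nat.mod_mod_of_dvd _ (dvd_mul_right d d'), mul_ite,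
    mul_one, mul_zero]

theorem protocol2_apply (hXY : X.val * Y.val < d * d') (a b : Fin d) :
    protocol2 d d' X Y a b =
      if b.val = (a.val + X.val * Y.val) % d then d' • (1 / (d * d' : ℕ) : ℝ) else 0 := by
  have hfiber : ∀ α : Fin (d * d'),
      (if a.val = α.val % d ∧ b.val = (α.val + X.val * Y.val) % d
        then (1 / (d * d' : ℕ) : ℝ) else 0) =
      if α.val % d = a.val then
        (if b.val = (a.val + X.val * Y.val) % d then (1 / (d * d' : ℕ) : ℝ) else 0) else 0 := by
    intro α
    by_cases h : α.val % d = a.val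
    · rw [← Nat.mod_add_mod α.val, h]
      simp
    · simp [h, Ne.symm h]
  rw [protocol2_apply_eq_sum hXY, sum_congr rfl fun α _ ↦ hfiber α,
    Fin.sum_ite_val_mod_eq d' a.isLt, smul_ite, smul_zero]

end Box

/-- Protocol 2 correctness: if `(α,β)` is distributed as a
`dd'`-box given `(X,Y)`, then `a = α mod d`, `b = β mod d` are distributed as
a `d`-box given `(X,Y)`. -/
theorem protocol2_correct (d d' : ℕ) (hd : 2 ≤ d) (hd' : 2 ≤ d') :
    ∀ (X Y : Fin 2) (a b : Fin d),
      protocol2 d d' X Y a b = dBox d X Y a b := by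
  intro X Y a b
  have hXY : X.val * Y.val ≤ 1 := Nat.mul_le_mul X.is_le Y.is_le
  have hdd' : d ≤ d * d' := Nat.le_mul_of_pos_right d (by omega)
  rw [protocol2_apply (by omega), dBox_apply (by omega)]
  congr 1
  rw [nsmul_eq_mul]
  push_cast
  field_simp
end
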